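/- For every natural number n ≥ 1, the sequential regex formula γn := (x1{Σ*} ∨ y1{Σ*})·(x2{Σ*} ∨ y2{Σ*})·⋯·(xn{Σ*} ∨ yn{Σ*}) (with 2n distinct variables x1,…,xn,y1,…,yn, where Σ* abbreviates (σ1∨⋯∨σs)* over all letters of Σ) has the property that every disjunctive functional regex formula β with ⟦β⟧(d) = ⟦γn⟧(d) for all documents d has at least 2^n disjuncts. -/

import Mathlib

namespace Spanners

open scoped Classical

/-! ### Spans and mappings -/

abbrev Span := ℕ × ℕ

abbrev VMapping := ℕ → Option Span

def emptyMapping : VMapping := fun _ => none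

def mapDom (μ : VMapping) : Set ℕ := {x | μ x ≠ none}

/-- Two mappings are compatible if they agree on every common variable. -/
def Compatible (μ1 μ2 : VMapping) : Prop :=
  ∀ x s1 s2, μ1 x = some s1 → μ2 x = some s2 → s1 = s2

def DisjointDom (μ1 μ2 : VMapping) : Prop :=
  ∀ x, μ1 x = none ∨ μ2 x = none

def munion (μ1 μ2 : VMapping) : VMapping := fun x =>
  match μ1 x with
  | some s => some s
  | none => μ2 x

def minsert (x : ℕ) (s : Span) (μ : VMapping) : VMapping :=
  fun y => if y = x then some s else μ y

/-- Natural join of two sets of mappings. -/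
def joinSet (S1 S2 : Set VMapping) : Set VMapping :=
  {μ | ∃ μ1 ∈ S1, ∃ μ2 ∈ S2, Compatible μ1 μ2 ∧ μ = munion μ1 μ2}

/-- Difference of two sets of mappings. -/
def diffSet (S1 S2 : Set VMapping) : Set VMapping :=
  {μ1 | μ1 ∈ S1 ∧ ∀ μ2 ∈ S2, ¬ Compatible μ1 μ2}

/-- Restriction of a mapping to a set of variables. -/
noncomputable def restrictMap (μ : VMapping) (V : Set ℕ) : VMapping :=
  fun x => if x ∈ V then μ x else none

/-- Projection of a set of mappings to a set of variables. -/
def projSet (V : Set ℕ) (S : Set VMapping) : Set VMapping :=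
  {μ' | ∃ μ ∈ S, μ' = restrictMap μ V}

/-! ### Regex formulas -/

inductive RGX (Sig : Type) where
  | empty : RGX Sig
  | eps : RGX Sig
  | letter : Sig → RGX Sig
  | union : RGX Sig → RGX Sig → RGX Sig
  | concat : RGX Sig → RGX Sig → RGX Sig
  | star : RGX Sig → RGX Sig
  | bind : ℕ → RGX Sig → RGX Sig

variable {Sig : Type}

def RGX.vars : RGX Sig → Finset ℕ
  | .empty => ∅
  | .eps => ∅
  | .letter _ => ∅
  | .union a b => a.vars ∪ b.vars
  | .concat a b => a.vars ∪ b.vars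
  | .star a => a.vars
  | .bind x a => insert x a.vars

def RGX.size : RGX Sig → ℕ
  | .empty => 1
  | .eps => 1
  | .letter _ => 1
  | .union a b => a.size + b.size + 1
  | .concat a b => a.size + b.size + 1
  | .star a => a.size + 1
  | .bind _ a => a.size + 1

/-- The schemaless semantics `⟨α⟩(d)`: `RMatch α d i j μ` means `([i,j⟩, μ) ∈ ⟨α⟩(d)`. -/
inductive RMatch : RGX Sig → List Sig → ℕ → ℕ → VMapping → Prop where
  | eps {d : List Sig} {i : ℕ} (h1 : 1 ≤ i) (h2 : i ≤ d.length + 1) :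
      RMatch .eps d i i emptyMapping
  | letter {d : List Sig} {i : ℕ} {σ : Sig} (h1 : 1 ≤ i) (h2 : d[i - 1]? = some σ) :
      RMatch (.letter σ) d i (i + 1) emptyMapping
  | unionL {a b : RGX Sig} {d : List Sig} {i j : ℕ} {μ : VMapping}
      (h : RMatch a d i j μ) : RMatch (.union a b) d i j μ
  | unionR {a b : RGX Sig} {d : List Sig} {i j : ℕ} {μ : VMapping}
      (h : RMatch b d i j μ) : RMatch (.union a b) d i j μ
  | concat {a b : RGX Sig} {d : List Sig} {i k j : ℕ} {μ1 μ2 : VMapping}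
      (h1 : RMatch a d i k μ1) (h2 : RMatch b d k j μ2) (hd : DisjointDom μ1 μ2) :
      RMatch (.concat a b) d i j (munion μ1 μ2)
  | bind {x : ℕ} {a : RGX Sig} {d : List Sig} {i j : ℕ} {μ : VMapping}
      (h : RMatch a d i j μ) (hx : μ x = none) :
      RMatch (.bind x a) d i j (minsert x (i, j) μ)
  | starNil {a : RGX Sig} {d : List Sig} {i : ℕ} (h1 : 1 ≤ i) (h2 : i ≤ d.length + 1) :
      RMatch (.star a) d i i emptyMapping
  | starCons {a : RGX Sig} {d : List Sig} {i k j : ℕ} {μ1 μ2 : VMapping}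
      (h1 : RMatch a d i k μ1) (h2 : RMatch (.star a) d k j μ2) (hd : DisjointDom μ1 μ2) :
      RMatch (.star a) d i j (munion μ1 μ2)

/-- `⟦α⟧(d)`: mappings extracted with the full span. -/
def rgxSem (α : RGX Sig) (d : List Sig) : Set VMapping :=
  {μ | RMatch α d 1 (d.length + 1) μ}

/-- Sequential regex formulas. -/
def RGX.Sequential : RGX Sig → Prop
  | .empty => True
  | .eps => True
  | .letter _ => True
  | .union a b => a.Sequential ∧ b.Sequential
  | .concat a b => a.Sequential ∧ b.Sequential ∧ Disjoint a.vars b.vars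
  | .star a => a.Sequential ∧ a.vars = ∅
  | .bind x a => a.Sequential ∧ x ∉ a.vars

/-- Variable-free words over the alphabet (built from ε, letters and concatenation). -/
inductive RGX.IsWord : RGX Sig → Prop where
  | eps : RGX.IsWord .eps
  | letter (σ : Sig) : RGX.IsWord (.letter σ)
  | concat {a b : RGX Sig} : a.IsWord → b.IsWord → RGX.IsWord (.concat a b)

/-- Functional for a set `V` of variables. -/
inductive FunctionalFor : RGX Sig → Finset ℕ → Prop where
  | word {α : RGX Sig} (h : α.IsWord) : FunctionalFor α ∅
  | union {a b : RGX Sig} {V : Finset ℕ} (ha : FunctionalFor a V) (hb : FunctionalFor b V) :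
      FunctionalFor (.union a b) V
  | concat {a b : RGX Sig} {V : Finset ℕ} (V1 : Finset ℕ) (hsub : V1 ⊆ V)
      (ha : FunctionalFor a V1) (hb : FunctionalFor b (V \ V1)) :
      FunctionalFor (.concat a b) V
  | star {a : RGX Sig} (h : FunctionalFor a ∅) : FunctionalFor (.star a) ∅
  | bind {x : ℕ} {a : RGX Sig} {V : Finset ℕ} (h : FunctionalFor a (V.erase x)) :
      FunctionalFor (.bind x a) V

def RGX.Functional (α : RGX Sig) : Prop := FunctionalFor α α.vars

/-- Disjunctive functional regex formulas: finite disjunctions of functional regex formulas. -/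
inductive DisjFunctional : RGX Sig → Prop where
  | base {γ : RGX Sig} (h : γ.Functional) : DisjFunctional γ
  | union {a b : RGX Sig} (ha : DisjFunctional a) (hb : DisjFunctional b) :
      DisjFunctional (.union a b)

/-- Number of disjuncts of a (disjunctive) regex formula. -/
def countDisjuncts : RGX Sig → ℕ
  | .union a b => countDisjuncts a + countDisjuncts b
  | _ => 1

/-- Disjunction-free regex formulas. -/
def RGX.DisjFree : RGX Sig → Prop
  | .union _ _ => False
  | .concat a b => a.DisjFree ∧ b.DisjFree
  | .star a => a.DisjFree
  | .bind _ a => a.DisjFree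
  | _ => True

/-- `γ` is synchronized for `x`: no subformula `γ1 ∨ γ2` contains `x`. -/
def RGX.SyncFor : RGX Sig → ℕ → Prop
  | .union a b, x => (x ∉ a.vars ∧ x ∉ b.vars) ∧ a.SyncFor x ∧ b.SyncFor x
  | .concat a b, x => a.SyncFor x ∧ b.SyncFor x
  | .star a, x => a.SyncFor x
  | .bind _ a, x => a.SyncFor x
  | _, _ => True

/-- Concatenation of a list of regex formulas. -/
def concatList : List (RGX Sig) → RGX Sig
  | [] => .eps
  | [α] => α
  | α :: rest => .concat α (concatList rest)

/-- Disjunction of a list of regex formulas. -/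
def disjList : List (RGX Sig) → RGX Sig
  | [] => .empty
  | [α] => α
  | α :: rest => .union α (disjList rest)

/-! ### vset-automata -/

inductive VLabel (Sig : Type) where
  | eps : VLabel Sig
  | letter : Sig → VLabel Sig
  | openv : ℕ → VLabel Sig
  | closev : ℕ → VLabel Sig
deriving DecidableEq

structure VA (Sig : Type) [DecidableEq Sig] where
  q0 : ℕ
  F : Finset ℕ
  δ : Finset (ℕ × VLabel Sig × ℕ)

variable [DecidableEq Sig]

/-- The states of a VA: the initial state and all states mentioned in `F` or in transitions. -/
def statesOf (A : VA Sig) : Finset ℕ :=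
  insert A.q0 (A.F ∪ A.δ.image (fun t => t.1) ∪ A.δ.image (fun t => t.2.2))

def labelVars : VLabel Sig → Finset ℕ
  | .openv x => {x}
  | .closev x => {x}
  | _ => ∅

/-- `Vars(A)`: the variables mentioned in the transitions of `A`. -/
def varsOf (A : VA Sig) : Finset ℕ := A.δ.biUnion (fun t => labelVars t.2.1)

/-- Total size of a VA: number of states plus number of transitions. -/
def vaSize (A : VA Sig) : ℕ := (statesOf A).card + A.δ.card

/-- `A.PathFrom p ls q`: a path (run segment) from `p` to `q` with label sequence `ls`. -/
inductive VA.PathFrom (A : VA Sig) : ℕ → List (VLabel Sig) → ℕ → Prop where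
  | nil (q : ℕ) : VA.PathFrom A q [] q
  | cons {p q r : ℕ} {l : VLabel Sig} {ls : List (VLabel Sig)}
      (h : (p, l, q) ∈ A.δ) (htail : VA.PathFrom A q ls r) : VA.PathFrom A p (l :: ls) r

/-- The word (document) read by a sequence of labels. -/
def readWord : List (VLabel Sig) → List Sig :=
  List.filterMap fun l => match l with
    | VLabel.letter σ => some σ
    | _ => none

def isLetterL : VLabel Sig → Bool
  | .letter _ => true
  | _ => false

/-- The current position in the document just before executing the `k`-th label. -/
def posAt (ls : List (VLabel Sig)) (k : ℕ) : ℕ := 1 + (ls.take k).countP isLetterL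

/-- Validity of a run, given by its label sequence. -/
def ValidLabels (ls : List (VLabel Sig)) : Prop :=
  ∀ x : ℕ,
    ls.count (VLabel.openv x) ≤ 1 ∧
    ls.count (VLabel.closev x) ≤ 1 ∧
    ((VLabel.openv x) ∈ ls ↔ (VLabel.closev x) ∈ ls) ∧
    ∀ i j : ℕ, ls[i]? = some (VLabel.openv x) → ls[j]? = some (VLabel.closev x) →
      posAt ls i ≤ posAt ls j

/-- The mapping `μ_ρ` extracted from a (valid accepting) run with label sequence `ls`. -/
def runMapping (ls : List (VLabel Sig)) : VMapping := fun x =>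
  if (VLabel.openv x) ∈ ls then
    some (posAt ls (ls.idxOf (VLabel.openv x)), posAt ls (ls.idxOf (VLabel.closev x)))
  else none

/-- `ls` is the label sequence of an accepting run of `A`. -/
def AcceptsWith (A : VA Sig) (ls : List (VLabel Sig)) : Prop :=
  ∃ qf, VA.PathFrom A A.q0 ls qf ∧ qf ∈ A.F

/-- `⟦A⟧(d)`. -/
def vaSem (A : VA Sig) (d : List Sig) : Set VMapping :=
  {μ | ∃ ls, AcceptsWith A ls ∧ readWord ls = d ∧ ValidLabels ls ∧ μ = runMapping ls}

/-- A VA is sequential if all of its accepting runs are valid. -/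
def VA.Sequential (A : VA Sig) : Prop := ∀ ls, AcceptsWith A ls → ValidLabels ls

/-- A run from the initial state to `q` that is a prefix of an accepting run. -/
def PrefixRun (A : VA Sig) (ls : List (VLabel Sig)) (q : ℕ) : Prop :=
  VA.PathFrom A A.q0 ls q ∧ ∃ ls' qf, VA.PathFrom A q ls' qf ∧ qf ∈ A.F

/-- `A` is semi-functional for the variable `x`: no state has extended configuration `d`. -/
def SemiFunctionalFor (A : VA Sig) (x : ℕ) : Prop :=
  ¬ ∃ q ls1 ls2, PrefixRun A ls1 q ∧ PrefixRun A ls2 q ∧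
      (VLabel.closev x) ∈ ls1 ∧ (VLabel.openv x) ∉ ls2

def SemiFunctionalForSet (A : VA Sig) (X : Finset ℕ) : Prop :=
  ∀ x ∈ X, SemiFunctionalFor A x

/-- Functional VA: sequential, and every accepting run opens and closes every variable. -/
def FunctionalVA (A : VA Sig) : Prop :=
  A.Sequential ∧ ∀ ls, AcceptsWith A ls → ∀ x ∈ varsOf A,
    (VLabel.openv x) ∈ ls ∧ (VLabel.closev x) ∈ ls

/-- `l` has a unique target state in `A`. -/
def UniqueTarget (A : VA Sig) (l : VLabel Sig) : Prop :=
  ∃ qt : ℕ, ∀ p q : ℕ, (p, l, q) ∈ A.δ → q = qt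

/-- `A` is synchronized for the variable `x`. -/
def SyncForVA (A : VA Sig) (x : ℕ) : Prop :=
  UniqueTarget A (VLabel.openv x) ∧ UniqueTarget A (VLabel.closev x) ∧
    ((∀ ls, AcceptsWith A ls → (VLabel.openv x) ∈ ls ∧ (VLabel.closev x) ∈ ls) ∨
     (∀ ls, AcceptsWith A ls → (VLabel.openv x) ∉ ls ∧ (VLabel.closev x) ∉ ls))

/-- `A` is the disjunctive functional VA with functional components `parts`. -/
def DisjFunctionalVAWith (A : VA Sig) (parts : List (VA Sig)) : Prop :=
  (∀ B ∈ parts, FunctionalVA B) ∧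
  (parts.Pairwise fun B C => Disjoint (statesOf B) (statesOf C)) ∧
  (∀ B ∈ parts, A.q0 ∉ statesOf B) ∧
  A.F = parts.foldr (fun B s => B.F ∪ s) (∅ : Finset ℕ) ∧
  A.δ = (parts.map (fun B => (A.q0, (VLabel.eps : VLabel Sig), B.q0))).toFinset
        ∪ parts.foldr (fun B s => B.δ ∪ s) (∅ : Finset (ℕ × VLabel Sig × ℕ))

def DisjFunctionalVA (A : VA Sig) : Prop := ∃ parts, DisjFunctionalVAWith A parts

/-! ### 3CNF formulas -/

/-- A 3CNF clause over `n` Boolean variables: a triple of literals; `(i, true)` is `xᵢ`,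
`(i, false)` is `¬xᵢ`. -/
def Clause3 (n : ℕ) : Type := (Fin n × Bool) × (Fin n × Bool) × (Fin n × Bool)

def litsOf {n : ℕ} (c : Clause3 n) : List (Fin n × Bool) := [c.1, c.2.1, c.2.2]

def clauseSat {n : ℕ} (τ : Fin n → Bool) (c : Clause3 n) : Prop :=
  ∃ l ∈ litsOf c, τ l.1 = l.2

def Sat3 {n m : ℕ} (φ : Fin m → Clause3 n) : Prop :=
  ∃ τ : Fin n → Bool, ∀ j, clauseSat τ (φ j)

end Spanners

namespace Spanners

variable {Sig : Type} [Fintype Sig] [DecidableEq Sig]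

/-- `σ1 ∨ ⋯ ∨ σs`, over all letters of the alphabet. -/
noncomputable def allLetters (Sig : Type) [Fintype Sig] [DecidableEq Sig] : RGX Sig :=
  disjList ((Finset.univ : Finset Sig).toList.map RGX.letter)

/-- `γn := (x1{Σ*} ∨ y1{Σ*})·⋯·(xn{Σ*} ∨ yn{Σ*})`, with `xᵢ, yᵢ` encoded as `2i, 2i+1`. -/
noncomputable def gammaN (Sig : Type) [Fintype Sig] [DecidableEq Sig] (n : ℕ) : RGX Sig :=
  concatList (List.ofFn fun i : Fin n =>
    RGX.union (.bind (2 * (i : ℕ)) (.star (allLetters Sig)))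
              (.bind (2 * (i : ℕ) + 1) (.star (allLetters Sig))))

end Spanners

namespace Spanners

/-!
A functional formula `γ` assigns exactly the variables `Vars(γ)` in every match, so the mappings
produced by a disjunctive functional formula have at most as many distinct domains as it has
disjuncts. On the empty document, `γn` produces for each of the `2 ^ n` ways of choosing `xᵢ` or
`yᵢ` in every factor a mapping whose domain is exactly the chosen set of variables.
-/

variable {Sig : Type}

@[simp]
lemma mapDom_emptyMapping : mapDom emptyMapping = ∅ := by
  ext x; simp [mapDom, emptyMapping]

@[simp]
lemma mapDom_munion (μ1 μ2 : VMapping) : mapDom (munion μ1 μ2) = mapDom μ1 ∪ mapDom μ2 := by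
  ext x; cases h : μ1 x <;> simp [mapDom, munion, h]

@[simp]
lemma mapDom_minsert (x : ℕ) (s : Span) (μ : VMapping) :
    mapDom (minsert x s μ) = insert x (mapDom μ) := by
  ext y; by_cases h : y = x <;> simp [mapDom, minsert, h]

@[simp]
lemma munion_emptyMapping (μ : VMapping) : munion μ emptyMapping = μ := by
  funext x; cases h : μ x <;> simp [munion, emptyMapping, h]

lemma RMatch.mapDom_subset_vars {α : RGX Sig} {d : List Sig} {i j : ℕ} {μ : VMapping}
    (h : RMatch α d i j μ) : mapDom μ ⊆ α.vars := by
  induction h with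
  | eps | letter | starNil => simp
  | unionL _ ih => exact ih.trans (by simp [RGX.vars])
  | unionR _ ih => exact ih.trans (by simp [RGX.vars])
  | concat _ _ _ ih1 ih2 => simpa [RGX.vars] using Set.union_subset_union ih1 ih2
  | bind _ _ ih => simpa [RGX.vars] using Set.insert_subset_insert ih
  | starCons _ _ _ ih1 ih2 => simpa [RGX.vars] using Set.union_subset ih1 ih2

lemma RMatch.disjointDom_of_disjoint_vars {a b : RGX Sig} {d : List Sig} {i k j : ℕ}
    {μ1 μ2 : VMapping} (h1 : RMatch a d i k μ1) (h2 : RMatch b d k j μ2)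
    (hab : Disjoint a.vars b.vars) : DisjointDom μ1 μ2 := by
  intro x
  by_contra! hx
  exact Finset.disjoint_left.mp hab (h1.mapDom_subset_vars hx.1) (h2.mapDom_subset_vars hx.2)

lemma FunctionalFor.subset_mapDom {α : RGX Sig} {V : Finset ℕ} (hf : FunctionalFor α V)
    {d : List Sig} {i j : ℕ} {μ : VMapping} (h : RMatch α d i j μ) : ↑V ⊆ mapDom μ := by
  induction hf generalizing i j μ with
  | word => simp
  | union _ _ iha ihb =>
    cases h with
    | unionL h => exact iha h
    | unionR h => exact ihb h
  | concat V1 _ _ _ iha ihb =>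
    cases h with
    | concat h1 h2 =>
      intro x hx
      rw [mapDom_munion]
      by_cases hx1 : x ∈ V1
      · exact Or.inl (iha h1 hx1)
      · exact Or.inr (ihb h2 (by simp [hx1, Finset.mem_coe.mp hx]))
  | star => simp
  | @bind x _ V _ ih =>
    cases h with
    | bind h =>
      calc (↑V : Set ℕ) ⊆ insert x ↑(V.erase x) := by exact_mod_cast V.insert_erase_subset x
        _ ⊆ mapDom _ := by rw [mapDom_minsert]; exact Set.insert_subset_insert (ih h)

lemma RGX.Functional.mapDom_eq {γ : RGX Sig} (hγ : γ.Functional) {d : List Sig} {i j : ℕ}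
    {μ : VMapping} (h : RMatch γ d i j μ) : mapDom μ = γ.vars :=
  h.mapDom_subset_vars.antisymm (FunctionalFor.subset_mapDom hγ h)

lemma one_le_countDisjuncts (β : RGX Sig) : 1 ≤ countDisjuncts β := by
  induction β <;> simp only [countDisjuncts] <;> omega

lemma DisjFunctional.exists_domains {β : RGX Sig} (hβ : DisjFunctional β) :
    ∃ D : Finset (Set ℕ), D.card ≤ countDisjuncts β ∧
      ∀ {d : List Sig} {i j : ℕ} {μ : VMapping}, RMatch β d i j μ → mapDom μ ∈ D := by
  induction hβ with
  | @base γ hγ =>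
    refine ⟨{↑γ.vars}, by simpa using one_le_countDisjuncts γ, fun h => ?_⟩
    simp [hγ.mapDom_eq h]
  | union _ _ iha ihb =>
    obtain ⟨Da, hDa, hma⟩ := iha
    obtain ⟨Db, hDb, hmb⟩ := ihb
    refine ⟨Da ∪ Db, ?_, fun h => ?_⟩
    · exact (Finset.card_union_le _ _).trans (by simp only [countDisjuncts]; omega)
    · cases h with
      | unionL h => exact Finset.mem_union_left _ (hma h)
      | unionR h => exact Finset.mem_union_right _ (hmb h)

lemma mem_vars_concatList {L : List (RGX Sig)} {x : ℕ} :
    x ∈ (concatList L).vars ↔ ∃ α ∈ L, x ∈ α.vars := by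
  induction L with
  | nil => simp [concatList, RGX.vars]
  | cons a L ih =>
    cases L with
    | nil => simp [concatList]
    | cons b L => simp [concatList, RGX.vars, ih]

lemma disjoint_vars_concatList {a : RGX Sig} {L : List (RGX Sig)}
    (h : ∀ b ∈ L, Disjoint a.vars b.vars) : Disjoint a.vars (concatList L).vars := by
  rw [Finset.disjoint_right]
  intro x hx hxa
  obtain ⟨b, hb, hxb⟩ := mem_vars_concatList.mp hx
  exact Finset.disjoint_left.mp (h b hb) hxa hxb

lemma sequential_concatList {L : List (RGX Sig)} (hL : ∀ α ∈ L, α.Sequential)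
    (hdisj : L.Pairwise fun a b => Disjoint a.vars b.vars) : (concatList L).Sequential := by
  induction L with
  | nil => trivial
  | cons a L ih =>
    obtain ⟨ha, hdisj⟩ := List.pairwise_cons.mp hdisj
    cases L with
    | nil => exact hL a (by simp)
    | cons b L =>
      exact ⟨hL a (by simp), ih (fun c hc => hL c (by simp [hc])) hdisj,
        disjoint_vars_concatList ha⟩

lemma RMatch.concatList_cons {a : RGX Sig} {L : List (RGX Sig)} {d : List Sig} {i k j : ℕ}
    {μ1 μ2 : VMapping} (h1 : RMatch a d i k μ1) (h2 : RMatch (concatList L) d k j μ2)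
    (hdisj : ∀ b ∈ L, Disjoint a.vars b.vars) :
    RMatch (concatList (a :: L)) d i j (munion μ1 μ2) := by
  cases L with
  | nil =>
    cases h2
    rwa [munion_emptyMapping]
  | cons b L =>
    exact .concat h1 h2 (h1.disjointDom_of_disjoint_vars h2 (disjoint_vars_concatList hdisj))

lemma exists_rmatch_concatList_ofFn {n : ℕ} (g : Fin n → RGX Sig)
    (hg : Pairwise fun i j => Disjoint (g i).vars (g j).vars) {d : List Sig} {k : ℕ}
    (hk1 : 1 ≤ k) (hk2 : k ≤ d.length + 1) (μ : Fin n → VMapping)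
    (hμ : ∀ i, RMatch (g i) d k k (μ i)) :
    ∃ ν, RMatch (concatList (List.ofFn g)) d k k ν ∧ mapDom ν = ⋃ i, mapDom (μ i) := by
  induction n with
  | zero => exact ⟨emptyMapping, RMatch.eps hk1 hk2, by simp⟩
  | succ n ih =>
    obtain ⟨ν, hν, hνdom⟩ := ih (fun i => g i.succ) (fun i j hij => hg (by simpa using hij))
      (fun i => μ i.succ) (fun i => hμ i.succ)
    refine ⟨munion (μ 0) ν, ?_, ?_⟩
    · rw [List.ofFn_succ]
      refine (hμ 0).concatList_cons hν fun b hb => ?_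
      obtain ⟨i, rfl⟩ := List.mem_ofFn.mp hb
      exact hg (Fin.succ_ne_zero i).symm
    · rw [mapDom_munion, hνdom, Set.iUnion_fin_add_one_eq_iUnion_succ]
      rfl

lemma vars_disjList_map_letter (l : List Sig) : (disjList (l.map RGX.letter)).vars = ∅ := by
  induction l with
  | nil => rfl
  | cons a l ih =>
    cases l with
    | nil => rfl
    | cons b l => simpa [disjList, RGX.vars] using ih

lemma sequential_disjList_map_letter (l : List Sig) : (disjList (l.map RGX.letter)).Sequential := by
  induction l with
  | nil => trivial
  | cons a l ih =>
    cases l with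
    | nil => trivial
    | cons b l => exact ⟨trivial, ih⟩

variable [Fintype Sig] [DecidableEq Sig]

noncomputable def gammaFactor (Sig : Type) [Fintype Sig] [DecidableEq Sig] (i : ℕ) : RGX Sig :=
  .union (.bind (2 * i) (.star (allLetters Sig))) (.bind (2 * i + 1) (.star (allLetters Sig)))

lemma vars_gammaFactor (i : ℕ) : (gammaFactor Sig i).vars = {2 * i, 2 * i + 1} := by
  simp [gammaFactor, RGX.vars, allLetters, vars_disjList_map_letter]

lemma sequential_gammaFactor (i : ℕ) : (gammaFactor Sig i).Sequential := by
  have hstar : (RGX.star (allLetters Sig)).Sequential :=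
    ⟨sequential_disjList_map_letter _, vars_disjList_map_letter _⟩
  refine ⟨⟨hstar, ?_⟩, ⟨hstar, ?_⟩⟩ <;> simp [RGX.vars, allLetters, vars_disjList_map_letter]

lemma disjoint_vars_gammaFactor {i j : ℕ} (hij : i ≠ j) :
    Disjoint (gammaFactor Sig i).vars (gammaFactor Sig j).vars := by
  simp only [vars_gammaFactor, Finset.disjoint_insert_left, Finset.disjoint_insert_right,
    Finset.disjoint_singleton, Finset.mem_insert, Finset.mem_singleton]
  omega

lemma sequential_gammaN (n : ℕ) : (gammaN Sig n).Sequential := by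
  refine sequential_concatList (fun α hα => ?_) (List.pairwise_ofFn.mpr fun i j hij => ?_)
  · obtain ⟨i, rfl⟩ := List.mem_ofFn.mp hα
    exact sequential_gammaFactor i
  · exact disjoint_vars_gammaFactor (Fin.val_ne_of_ne hij.ne)

def chosenVar {n : ℕ} (f : Fin n → Bool) (i : Fin n) : ℕ := 2 * i + (f i).toNat

lemma range_chosenVar_injective (n : ℕ) :
    Function.Injective fun f : Fin n → Bool => Set.range (chosenVar f) := by
  intro f g (hfg : Set.range (chosenVar f) = Set.range (chosenVar g))
  funext i
  obtain ⟨j, hj⟩ : chosenVar f i ∈ Set.range (chosenVar g) := hfg ▸ Set.mem_range_self i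
  have := Bool.toNat_le (f i)
  have := Bool.toNat_le (g j)
  have hji : j = i := Fin.ext (by simp only [chosenVar] at hj; omega)
  subst hji
  cases hf : f j <;> cases hg : g j <;> simp [chosenVar, hf, hg] at hj ⊢

lemma rmatch_gammaFactor_nil (i : ℕ) (b : Bool) :
    RMatch (gammaFactor Sig i) [] 1 1 (minsert (2 * i + b.toNat) (1, 1) emptyMapping) := by
  have hstar : RMatch (RGX.star (allLetters Sig)) [] 1 1 emptyMapping := .starNil le_rfl le_rfl
  cases b
  · exact .unionL (.bind hstar rfl)
  · exact .unionR (.bind hstar rfl)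

lemma exists_mem_rgxSem_gammaN_nil {n : ℕ} (f : Fin n → Bool) :
    ∃ μ ∈ rgxSem (gammaN Sig n) [], mapDom μ = Set.range (chosenVar f) := by
  obtain ⟨μ, hμ, hdom⟩ := exists_rmatch_concatList_ofFn (fun i : Fin n => gammaFactor Sig i)
    (fun i j hij => disjoint_vars_gammaFactor (Fin.val_ne_of_ne hij)) le_rfl le_rfl
    (fun i => minsert (chosenVar f i) (1, 1) emptyMapping)
    (fun i => rmatch_gammaFactor_nil i (f i))
  refine ⟨μ, hμ, ?_⟩
  rw [hdom, Set.range_eq_iUnion]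
  simp only [mapDom_minsert, mapDom_emptyMapping, LawfulSingleton.insert_empty_eq]

theorem statement9_general (n : ℕ) :
    (gammaN Sig n).Sequential ∧
    ∀ β : RGX Sig, DisjFunctional β →
      (∀ d : List Sig, rgxSem β d = rgxSem (gammaN Sig n) d) →
      2 ^ n ≤ countDisjuncts β := by
  refine ⟨sequential_gammaN n, fun β hβ hsem => ?_⟩
  obtain ⟨D, hD, hdom⟩ := hβ.exists_domains
  have hmaps : ∀ f : Fin n → Bool, Set.range (chosenVar f) ∈ D := fun f => by
    obtain ⟨μ, hμ, hμdom⟩ := exists_mem_rgxSem_gammaN_nil (Sig := Sig) f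
    rw [← hsem] at hμ
    exact hμdom ▸ hdom hμ
  calc 2 ^ n = (Finset.univ : Finset (Fin n → Bool)).card := by simp
    _ ≤ D.card := Finset.card_le_card_of_injOn _ (fun f _ => hmaps f)
        (range_chosenVar_injective n).injOn
    _ ≤ countDisjuncts β := hD

theorem statement9 (n : ℕ) (hn : 1 ≤ n) :
    (gammaN Sig n).Sequential ∧
    ∀ β : RGX Sig, DisjFunctional β →
      (∀ d : List Sig, rgxSem β d = rgxSem (gammaN Sig n) d) →
      2 ^ n ≤ countDisjuncts β :=
  statement9_general n

end Spanners
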